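/- arXiv:1312.0177 — 5 statements merged into one kernel-verified Lean document; each statement's English description precedes it below -/
import Mathlib

section
/- Let T be a bounded self-adjoint operator on a Hilbert space K. Then the image of T², with the operator-range inner product of T, is dense in the operator range M(T), and for all x, y in K one has ⟨Tx, T²y⟩_{M(T)} = ⟨Tx, y⟩_K. -/
/-! Every vector of `range T` is `T x` with `x ⊥ ker T`, so the defining property of the
operator-range inner product applies to it; self-adjointness then moves one factor `T` across:
`⟨T x, T (T y)⟩_{M(T)} = ⟪x, T y⟫ = ⟪T x, y⟫`. Density follows by testing `T x` against
`T (T (T x))`, which gives `‖T x‖² = 0`. -/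

open scoped ComplexInnerProductSpace

section OperatorRange

variable {𝕜 E F : Type*} [RCLike 𝕜] [NormedAddCommGroup E] [InnerProductSpace 𝕜 E]
  [CompleteSpace E] [NormedAddCommGroup F] [NormedSpace 𝕜 F]

theorem ContinuousLinearMap.exists_mem_orthogonal_ker_apply_eq (T : E →L[𝕜] F) (x : E) :
    ∃ x' ∈ (LinearMap.ker (T : E →ₗ[𝕜] F))ᗮ, T x' = T x := by
  set N := LinearMap.ker (T : E →ₗ[𝕜] F)
  refine ⟨x - N.starProjection x, N.sub_starProjection_mem_orthogonal x, ?_⟩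
  have hN : T (N.starProjection x) = 0 := N.starProjection_apply_mem x
  rw [map_sub, hN, sub_zero]

theorem IsSelfAdjoint.operatorRange_inner_apply_apply {T : E →L[𝕜] E} (hT : IsSelfAdjoint T)
    {ip : E → E → 𝕜}
    (hip : ∀ x y : E, x ∈ (LinearMap.ker (T : E →ₗ[𝕜] E))ᗮ → ip (T x) (T y) = inner 𝕜 x y)
    (x y : E) : ip (T x) (T (T y)) = inner 𝕜 (T x) y := by
  obtain ⟨x', hx', hTx'⟩ := T.exists_mem_orthogonal_ker_apply_eq x
  rw [← hTx', hip x' (T y) hx']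
  exact (hT.isSymmetric x' y).symm

end OperatorRange

theorem stmt_0 {K : Type*} [NormedAddCommGroup K] [InnerProductSpace ℂ K] [CompleteSpace K]
    (T : K →L[ℂ] K) (hT : IsSelfAdjoint T)
    (ip : K → K → ℂ)
    (hip : ∀ x y : K, x ∈ (LinearMap.ker (T : K →ₗ[ℂ] K))ᗮ → ip (T x) (T y) = ⟪x, y⟫) :
    (∀ x : K, (∀ y : K, ip (T x) (T (T y)) = 0) → T x = 0) ∧
      ∀ x y : K, ip (T x) (T (T y)) = ⟪T x, y⟫ := by
  have hinner := hT.operatorRange_inner_apply_apply hip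
  refine ⟨fun x hx => ?_, hinner⟩
  rw [← inner_self_eq_zero (𝕜 := ℂ), ← hinner, hx]
end

section
/- Let Φ ∈ S₂(E, E_*). The multiplication operators U_j given by multiplication by the coordinate functions Z_j (j = 1, 2) on the de Branges–Rovnyak model space ℋ (the operator range of [[I, Φ],[Φ*, I]]^{1/2} on L²(E_*) ⊕ L²(E)) are unitary. -/
/- STATEMENT 3: Let Φ ∈ S₂(E, E_*).  The multiplication operators U_j by the coordinate
functions Z_j (j = 1,2) on the de Branges–Rovnyak model ℋ — the operator range of
S = [[I, Φ],[Φ*, I]]^{1/2} on L²(E_*) ⊕ L²(E) — are unitary.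

L²(E_*), L²(E) are abstract Hilbert spaces; `MΦ` is multiplication by (the boundary values
of) Φ, a contraction; `ZE`, `ZEs` are the (unitary) multiplications by a coordinate
function Z_j on L²(E) and L²(E_*), which commute with MΦ; `S` is the self-adjoint
nonnegative square root of the block operator [[I, MΦ],[MΦ*, I]] (hypothesis `hS2`), and
`U` acts componentwise by (f,g) ↦ (Z_j f, Z_j g).  The operator-range inner product of ℋ
is encoded by `ip`.  Conclusion: U maps ℋ = range S onto itself and preserves the ℋ inner
product, i.e. U is unitary on ℋ. -/

open scoped ComplexInnerProductSpace

noncomputable def pr {A B : Type*} [NormedAddCommGroup A] [NormedAddCommGroup B]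
    (f : A) (g : B) : WithLp 2 (A × B) := (WithLp.equiv 2 (A × B)).symm (f, g)

/-
The coordinate multiplication `U` is unitary on L²(E_*) ⊕ L²(E), and it commutes with the
block operator `S² = [[I, Φ], [Φ*, I]]`: `Z_j` commutes with `Φ`, hence, being unitary, also
with `Φ*`. By the continuous functional calculus `U` then commutes with the positive square
root `S`, so `U (S x) = S (U x)` and `U` maps `ℋ = range S` onto itself. Since `U*` commutes
with `S` as well, `U` preserves `(ker S)ᗮ`; writing `S x = S p` with `p ⊥ ker S` gives
`⟨U S x, U S y⟩_ℋ = ⟨S U p, S U y⟩_ℋ = ⟨U p, U y⟩ = ⟨p, y⟩ = ⟨S x, S y⟩_ℋ`.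
-/

open scoped InnerProductSpace
open ContinuousLinearMap

theorem Commute.of_mul_self_left_of_nonneg {A : Type*} [CStarAlgebra A] [PartialOrder A]
    [StarOrderedRing A] {a b : A} (ha : 0 ≤ a) (h : Commute (a * a) b) : Commute a b := by
  rw [← CFC.sqrt_mul_self a ha, CFC.sqrt_eq_cfc]
  exact h.cfc_nnreal _

section ProdL2

variable {𝕜 E F : Type*} [RCLike 𝕜]
  [NormedAddCommGroup E] [InnerProductSpace 𝕜 E] [NormedAddCommGroup F] [InnerProductSpace 𝕜 F]

theorem surjective_of_apply_pr {u : E → E} {v : F → F}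
    {U : WithLp 2 (E × F) → WithLp 2 (E × F)}
    (hu : Function.Surjective u) (hv : Function.Surjective v)
    (hU : ∀ f g, U (pr f g) = pr (u f) (v g)) : Function.Surjective U := by
  intro z
  obtain ⟨f, hf⟩ := hu z.ofLp.1
  obtain ⟨g, hg⟩ := hv z.ofLp.2
  exact ⟨pr f g, by rw [hU, hf, hg]; rfl⟩

theorem inner_map_map_of_apply_pr {u : E → E} {v : F → F}
    {U : WithLp 2 (E × F) → WithLp 2 (E × F)}
    (hu : ∀ x y, ⟪u x, u y⟫_𝕜 = ⟪x, y⟫_𝕜) (hv : ∀ x y, ⟪v x, v y⟫_𝕜 = ⟪x, y⟫_𝕜)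
    (hU : ∀ f g, U (pr f g) = pr (u f) (v g)) (x y : WithLp 2 (E × F)) :
    ⟪U x, U y⟫_𝕜 = ⟪x, y⟫_𝕜 := by
  change ⟪U (pr x.ofLp.1 x.ofLp.2), U (pr y.ofLp.1 y.ofLp.2)⟫_𝕜 = _
  rw [hU, hU]
  exact congrArg₂ (· + ·) (hu _ _) (hv _ _)

variable [CompleteSpace E] [CompleteSpace F]

theorem ContinuousLinearMap.adjoint_comp_eq_comp_adjoint {u : E →L[𝕜] E} {v : F →L[𝕜] F}
    {a : F →L[𝕜] E} (hu : adjoint u ∘L u = 1) (hv : v ∘L adjoint v = 1) (h : u ∘L a = a ∘L v) :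
    v ∘L adjoint a = adjoint a ∘L u := by
  have h' : adjoint a ∘L adjoint u = adjoint v ∘L adjoint a := by
    rw [← adjoint_comp, h, adjoint_comp]
  calc v ∘L adjoint a = v ∘L (adjoint a ∘L adjoint u) ∘L u := by
        rw [comp_assoc (adjoint a), hu, one_def, comp_id]
    _ = (v ∘L adjoint v) ∘L adjoint a ∘L u := by
        rw [h']; simp only [comp_assoc]
    _ = adjoint a ∘L u := by
        rw [hv, one_def, id_comp]

theorem commute_of_apply_pr {M : F →L[𝕜] E} {u : E →L[𝕜] E} {v : F →L[𝕜] F}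
    {T U : WithLp 2 (E × F) →L[𝕜] WithLp 2 (E × F)}
    (hT : ∀ f g, T (pr f g) = pr (f + M g) (adjoint M f + g))
    (hU : ∀ f g, U (pr f g) = pr (u f) (v g))
    (huM : u ∘L M = M ∘L v) (hvM : v ∘L adjoint M = adjoint M ∘L u) : Commute T U := by
  ext x
  change T (U (pr x.ofLp.1 x.ofLp.2)) = U (T (pr x.ofLp.1 x.ofLp.2))
  rw [hU, hT, hT, hU, map_add, map_add, ← comp_apply u M, huM, ← comp_apply v, hvM]
  rfl

end ProdL2

section OperatorRange

variable {𝕜 E : Type*} [RCLike 𝕜]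
  [NormedAddCommGroup E] [InnerProductSpace 𝕜 E] [CompleteSpace E] {S U : E →L[𝕜] E}

theorem map_mem_orthogonal_ker_of_commute (hS : IsSelfAdjoint S) (hSU : Commute S U) {p : E}
    (hp : p ∈ (LinearMap.ker S.toLinearMap)ᗮ) : U p ∈ (LinearMap.ker S.toLinearMap)ᗮ := by
  have hSU' : Commute S (adjoint U) := by
    have h := hSU.star_star
    rwa [hS.star_eq] at h
  refine (Submodule.mem_orthogonal _ _).mpr fun m hm => ?_
  rw [← adjoint_inner_left]
  refine (Submodule.mem_orthogonal _ p).mp hp _ ?_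
  rw [LinearMap.mem_ker, coe_coe] at hm ⊢
  calc S (adjoint U m) = adjoint U (S m) := DFunLike.congr_fun hSU'.eq m
    _ = 0 := by rw [hm, map_zero]

theorem inner_operatorRange_map_map (hS : IsSelfAdjoint S) (hSU : Commute S U)
    (hU : ∀ x y, ⟪U x, U y⟫_𝕜 = ⟪x, y⟫_𝕜) {ip : E → E → 𝕜}
    (hip : ∀ x y, x ∈ (LinearMap.ker S.toLinearMap)ᗮ → ip (S x) (S y) = ⟪x, y⟫_𝕜) (x y : E) :
    ip (U (S x)) (U (S y)) = ip (S x) (S y) := by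
  have hUS : ∀ z, U (S z) = S (U z) := fun z => DFunLike.congr_fun hSU.eq.symm z
  obtain ⟨k, hk, p, hp, rfl⟩ :=
    Submodule.exists_add_mem_mem_orthogonal (K := LinearMap.ker S.toLinearMap) x
  rw [LinearMap.mem_ker, coe_coe] at hk
  rw [map_add, hk, zero_add, hUS, hUS, hip _ _ (map_mem_orthogonal_ker_of_commute hS hSU hp),
    hU, hip _ _ hp]

end OperatorRange

theorem stmt_3_general {L2E L2Es : Type*}
    [NormedAddCommGroup L2E] [InnerProductSpace ℂ L2E] [CompleteSpace L2E]
    [NormedAddCommGroup L2Es] [InnerProductSpace ℂ L2Es] [CompleteSpace L2Es]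
    (MΦ : L2E →L[ℂ] L2Es)
    (ZE : L2E →L[ℂ] L2E) (ZEs : L2Es →L[ℂ] L2Es)
    (hZE₁ : ContinuousLinearMap.adjoint ZE ∘L ZE = 1)
    (hZE₂ : ZE ∘L ContinuousLinearMap.adjoint ZE = 1)
    (hZEs₁ : ContinuousLinearMap.adjoint ZEs ∘L ZEs = 1)
    (hZEs₂ : ZEs ∘L ContinuousLinearMap.adjoint ZEs = 1)
    (hcomm : ZEs ∘L MΦ = MΦ ∘L ZE)
    (S : WithLp 2 (L2Es × L2E) →L[ℂ] WithLp 2 (L2Es × L2E))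
    (hS : IsSelfAdjoint S)
    (hSpos : ∀ x, 0 ≤ (⟪S x, x⟫).re)
    (hS2 : ∀ (f : L2Es) (g : L2E),
      S (S (pr f g)) = pr (f + MΦ g) (ContinuousLinearMap.adjoint MΦ f + g))
    (U : WithLp 2 (L2Es × L2E) →L[ℂ] WithLp 2 (L2Es × L2E))
    (hU : ∀ (f : L2Es) (g : L2E), U (pr f g) = pr (ZEs f) (ZE g))
    (ip : WithLp 2 (L2Es × L2E) → WithLp 2 (L2Es × L2E) → ℂ)
    (hip : ∀ x y, x ∈ (LinearMap.ker S.toLinearMap)ᗮ → ip (S x) (S y) = ⟪x, y⟫) :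
    (∀ x, ∃ y, U (S x) = S y) ∧ (∀ y, ∃ x, U (S x) = S y) ∧
      ∀ x y, ip (U (S x)) (U (S y)) = ip (S x) (S y) := by
  have hUinner : ∀ x y, ⟪U x, U y⟫ = ⟪x, y⟫ :=
    inner_map_map_of_apply_pr (ZEs.inner_map_map_iff_adjoint_comp_self.mpr hZEs₁)
      (ZE.inner_map_map_iff_adjoint_comp_self.mpr hZE₁) hU
  have hUsurj : Function.Surjective U :=
    surjective_of_apply_pr
      (Function.LeftInverse.surjective (g := adjoint ZEs) (DFunLike.congr_fun hZEs₂))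
      (Function.LeftInverse.surjective (g := adjoint ZE) (DFunLike.congr_fun hZE₂)) hU
  have hSnonneg : 0 ≤ S := (nonneg_iff_isPositive S).mpr ⟨hS.isSymmetric, hSpos⟩
  have hSU : Commute S U := Commute.of_mul_self_left_of_nonneg hSnonneg
    (commute_of_apply_pr hS2 hU hcomm (adjoint_comp_eq_comp_adjoint hZEs₁ hZE₂ hcomm))
  have hUS : ∀ z, U (S z) = S (U z) := fun z => DFunLike.congr_fun hSU.eq.symm z
  refine ⟨fun x => ⟨U x, hUS x⟩, fun y => ?_, inner_operatorRange_map_map hS hSU hUinner hip⟩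
  obtain ⟨x, rfl⟩ := hUsurj y
  exact ⟨x, hUS x⟩

theorem stmt_3 {L2E L2Es : Type*}
    [NormedAddCommGroup L2E] [InnerProductSpace ℂ L2E] [CompleteSpace L2E]
    [NormedAddCommGroup L2Es] [InnerProductSpace ℂ L2Es] [CompleteSpace L2Es]
    (MΦ : L2E →L[ℂ] L2Es) (hMΦ : ‖MΦ‖ ≤ 1)
    (ZE : L2E →L[ℂ] L2E) (ZEs : L2Es →L[ℂ] L2Es)
    (hZE₁ : ContinuousLinearMap.adjoint ZE ∘L ZE = 1)
    (hZE₂ : ZE ∘L ContinuousLinearMap.adjoint ZE = 1)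
    (hZEs₁ : ContinuousLinearMap.adjoint ZEs ∘L ZEs = 1)
    (hZEs₂ : ZEs ∘L ContinuousLinearMap.adjoint ZEs = 1)
    (hcomm : ZEs ∘L MΦ = MΦ ∘L ZE)
    (S : WithLp 2 (L2Es × L2E) →L[ℂ] WithLp 2 (L2Es × L2E))
    (hS : IsSelfAdjoint S)
    (hSpos : ∀ x, 0 ≤ (⟪S x, x⟫).re)
    (hS2 : ∀ (f : L2Es) (g : L2E),
      S (S (pr f g)) = pr (f + MΦ g) (ContinuousLinearMap.adjoint MΦ f + g))
    (U : WithLp 2 (L2Es × L2E) →L[ℂ] WithLp 2 (L2Es × L2E))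
    (hU : ∀ (f : L2Es) (g : L2E), U (pr f g) = pr (ZEs f) (ZE g))
    (ip : WithLp 2 (L2Es × L2E) → WithLp 2 (L2Es × L2E) → ℂ)
    (hip : ∀ x y, x ∈ (LinearMap.ker S.toLinearMap)ᗮ → ip (S x) (S y) = ⟪x, y⟫) :
    (∀ x, ∃ y, U (S x) = S y) ∧ (∀ y, ∃ x, U (S x) = S y) ∧
      ∀ x y, ip (U (S x)) (U (S y)) = ip (S x) (S y) :=
  stmt_3_general MΦ ZE ZEs hZE₁ hZE₂ hZEs₁ hZEs₂ hcomm S hS hSpos hS2 U hU ip hip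
end

section
/- Let Φ ∈ S₂(E, E_*). The subspace F := {(Φe, e) : e ∈ E} of the de Branges–Rovnyak model ℋ is wandering for the pair of commuting unitaries (U₁, U₂): for every (n₁, n₂) ∈ ℤ² \ {(0,0)} and η, ν ∈ E, the vector (Φη, η) is orthogonal in ℋ to U₁^{n₁}U₂^{n₂}(Φν, ν). Moreover, ⟨(Φη, η), (Φν, ν)⟩_ℋ = ⟨η, ν⟩_E. -/
/- STATEMENT 4: Let Φ ∈ S₂(E, E_*).  The subspace F = {(Φe, e) : e ∈ E} of the de
Branges–Rovnyak model ℋ is wandering for the commuting unitaries (U₁, U₂): for every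
(n₁,n₂) ∈ ℤ² \ {(0,0)} and η, ν ∈ E one has (Φη, η) ⟂_ℋ U₁^{n₁}U₂^{n₂}(Φν, ν), and
moreover ⟨(Φη,η), (Φν,ν)⟩_ℋ = ⟨η, ν⟩_E.

`u n` (resp. `us n`) is the unitary ℤ²-representation n ↦ Z₁^{n₁}Z₂^{n₂} on L²(E)
(resp. L²(E_*)); `ι : E → L²(E)` is the isometric embedding as constants, which is
wandering for (Z₁, Z₂) in L²(E) (hypothesis `hwand`); `Un n` acts componentwise and
commutes with S = [[I,Φ],[Φ*,I]]^{1/2}.  Note (Φe, e) = [[I,Φ],[Φ*,I]](0, e) = S(S(0,e)),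
so the element (Φη, η) of ℋ is `S (S (pr 0 (ι η)))`. -/

open scoped ComplexInnerProductSpace

/- For `a ⊥ ker S` the operator-range inner product is `⟨S a, S b⟩_ℋ = ⟪a, b⟫`; since `S` is
self-adjoint, `S x ⊥ ker S`, hence `⟨S² x, S z⟩_ℋ = ⟪S x, z⟫ = ⟪x, S z⟫`. With `x = (0, ι η)` and
`S z = S² (0, g) = (Φ g, g)` this is `⟪ι η, g⟫`. The shifts commute with `S`, so
`U^n (Φ ν, ν) = S² (0, Z^n ι ν)`, and both claims reduce to the constants `ι E` forming an
isometrically embedded wandering subspace of `L²(E)`. -/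

open scoped InnerProductSpace

section OperatorRange

variable {𝕜 H : Type*} [RCLike 𝕜] [NormedAddCommGroup H] [InnerProductSpace 𝕜 H]
  [CompleteSpace H] {S : H →L[𝕜] H}

theorem IsSelfAdjoint.apply_mem_orthogonal_ker (hS : IsSelfAdjoint S) (x : H) :
    S x ∈ (LinearMap.ker S.toLinearMap)ᗮ := by
  rw [S.orthogonal_ker, hS.adjoint_eq]
  exact Submodule.le_topologicalClosure _ ⟨x, rfl⟩

theorem IsSelfAdjoint.operatorRangeInner_apply_apply_left (hS : IsSelfAdjoint S)
    {ip : H → H → 𝕜}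
    (hip : ∀ x y, x ∈ (LinearMap.ker S.toLinearMap)ᗮ → ip (S x) (S y) = ⟪x, y⟫_𝕜) (x z : H) :
    ip (S (S x)) (S z) = ⟪x, S z⟫_𝕜 := by
  rw [hip _ _ (hS.apply_mem_orthogonal_ker x)]
  exact hS.isSymmetric x z

end OperatorRange

theorem ContinuousLinearMap.apply_apply_apply_of_comp_eq {R M : Type*} [Semiring R]
    [AddCommMonoid M] [Module R M] [TopologicalSpace M] {U S : M →L[R] M}
    (h : U ∘L S = S ∘L U) (x : M) : U (S (S x)) = S (S (U x)) := by
  have hcomm : ∀ y, U (S y) = S (U y) := DFunLike.congr_fun h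
  rw [hcomm, hcomm]

theorem inner_pr_pr {𝕜 A B : Type*} [RCLike 𝕜] [NormedAddCommGroup A] [InnerProductSpace 𝕜 A]
    [NormedAddCommGroup B] [InnerProductSpace 𝕜 B] (f f' : A) (g g' : B) :
    ⟪pr f g, pr f' g'⟫_𝕜 = ⟪f, f'⟫_𝕜 + ⟪g, g'⟫_𝕜 :=
  WithLp.prod_inner_apply _ _

theorem stmt_4_general {E L2E L2Es : Type*}
    [NormedAddCommGroup E] [InnerProductSpace ℂ E] [CompleteSpace E]
    [NormedAddCommGroup L2E] [InnerProductSpace ℂ L2E] [CompleteSpace L2E]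
    [NormedAddCommGroup L2Es] [InnerProductSpace ℂ L2Es] [CompleteSpace L2Es]
    (MΦ : L2E →L[ℂ] L2Es)
    -- the unitary ℤ²-representations n ↦ Z₁^{n₁} Z₂^{n₂} on L²(E) and L²(E_*):
    (u : ℤ × ℤ → (L2E →L[ℂ] L2E)) (us : ℤ × ℤ → (L2Es →L[ℂ] L2Es))
    -- ι : E → L²(E), the isometric embedding as constant functions, wandering for (Z₁,Z₂):
    (ι : E →ₗ[ℂ] L2E)
    (hι : ∀ η ν : E, ⟪ι η, ι ν⟫ = ⟪η, ν⟫)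
    (hwand : ∀ n : ℤ × ℤ, n ≠ 0 → ∀ η ν : E, ⟪ι η, u n (ι ν)⟫ = 0)
    -- S = [[I,Φ],[Φ*,I]]^{1/2} and the componentwise action Un of ℤ²:
    (S : WithLp 2 (L2Es × L2E) →L[ℂ] WithLp 2 (L2Es × L2E))
    (hS : IsSelfAdjoint S)
    (hS2 : ∀ (f : L2Es) (g : L2E),
      S (S (pr f g)) = pr (f + MΦ g) (ContinuousLinearMap.adjoint MΦ f + g))
    (Un : ℤ × ℤ → (WithLp 2 (L2Es × L2E) →L[ℂ] WithLp 2 (L2Es × L2E)))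
    (hUn : ∀ n (f : L2Es) (g : L2E), Un n (pr f g) = pr (us n f) (u n g))
    (hUnS : ∀ n, Un n ∘L S = S ∘L Un n)
    -- the operator-range inner product of ℋ:
    (ip : WithLp 2 (L2Es × L2E) → WithLp 2 (L2Es × L2E) → ℂ)
    (hip : ∀ x y, x ∈ (LinearMap.ker S.toLinearMap)ᗮ → ip (S x) (S y) = ⟪x, y⟫) :
    (∀ n : ℤ × ℤ, n ≠ 0 → ∀ η ν : E,
        ip (S (S (pr (0 : L2Es) (ι η)))) (Un n (S (S (pr (0 : L2Es) (ι ν))))) = 0) ∧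
      ∀ η ν : E, ip (S (S (pr (0 : L2Es) (ι η)))) (S (S (pr (0 : L2Es) (ι ν)))) = ⟪η, ν⟫ := by
  have hgraph : ∀ (η : E) (g : L2E),
      ip (S (S (pr (0 : L2Es) (ι η)))) (S (S (pr (0 : L2Es) g))) = ⟪ι η, g⟫ := by
    intro η g
    rw [hS.operatorRangeInner_apply_apply_left hip, hS2, inner_pr_pr]
    simp
  refine ⟨fun n hn η ν => ?_, fun η ν => ?_⟩
  · rw [ContinuousLinearMap.apply_apply_apply_of_comp_eq (hUnS n), hUn, map_zero,
      hgraph, hwand n hn]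
  · rw [hgraph, hι]

theorem stmt_4 {E L2E L2Es : Type*}
    [NormedAddCommGroup E] [InnerProductSpace ℂ E] [CompleteSpace E]
    [NormedAddCommGroup L2E] [InnerProductSpace ℂ L2E] [CompleteSpace L2E]
    [NormedAddCommGroup L2Es] [InnerProductSpace ℂ L2Es] [CompleteSpace L2Es]
    (MΦ : L2E →L[ℂ] L2Es) (hMΦ : ‖MΦ‖ ≤ 1)
    -- the unitary ℤ²-representations n ↦ Z₁^{n₁} Z₂^{n₂} on L²(E) and L²(E_*):
    (u : ℤ × ℤ → (L2E →L[ℂ] L2E)) (us : ℤ × ℤ → (L2Es →L[ℂ] L2Es))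
    (hu0 : u 0 = 1) (huadd : ∀ m n, u (m + n) = u m ∘L u n)
    (huadj : ∀ n, ContinuousLinearMap.adjoint (u n) = u (-n))
    (hus0 : us 0 = 1) (husadd : ∀ m n, us (m + n) = us m ∘L us n)
    (husadj : ∀ n, ContinuousLinearMap.adjoint (us n) = us (-n))
    (hmult : ∀ n, us n ∘L MΦ = MΦ ∘L u n)
    -- ι : E → L²(E), the isometric embedding as constant functions, wandering for (Z₁,Z₂):
    (ι : E →ₗ[ℂ] L2E)
    (hι : ∀ η ν : E, ⟪ι η, ι ν⟫ = ⟪η, ν⟫)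
    (hwand : ∀ n : ℤ × ℤ, n ≠ 0 → ∀ η ν : E, ⟪ι η, u n (ι ν)⟫ = 0)
    -- S = [[I,Φ],[Φ*,I]]^{1/2} and the componentwise action Un of ℤ²:
    (S : WithLp 2 (L2Es × L2E) →L[ℂ] WithLp 2 (L2Es × L2E))
    (hS : IsSelfAdjoint S) (hSpos : ∀ x, 0 ≤ (⟪S x, x⟫).re)
    (hS2 : ∀ (f : L2Es) (g : L2E),
      S (S (pr f g)) = pr (f + MΦ g) (ContinuousLinearMap.adjoint MΦ f + g))
    (Un : ℤ × ℤ → (WithLp 2 (L2Es × L2E) →L[ℂ] WithLp 2 (L2Es × L2E)))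
    (hUn : ∀ n (f : L2Es) (g : L2E), Un n (pr f g) = pr (us n f) (u n g))
    (hUnS : ∀ n, Un n ∘L S = S ∘L Un n)
    -- the operator-range inner product of ℋ:
    (ip : WithLp 2 (L2Es × L2E) → WithLp 2 (L2Es × L2E) → ℂ)
    (hip : ∀ x y, x ∈ (LinearMap.ker S.toLinearMap)ᗮ → ip (S x) (S y) = ⟪x, y⟫) :
    (∀ n : ℤ × ℤ, n ≠ 0 → ∀ η ν : E,
        ip (S (S (pr (0 : L2Es) (ι η)))) (Un n (S (S (pr (0 : L2Es) (ι ν))))) = 0) ∧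
      ∀ η ν : E, ip (S (S (pr (0 : L2Es) (ι η)))) (S (S (pr (0 : L2Es) (ι ν)))) = ⟪η, ν⟫ :=
  stmt_4_general MΦ u us ι hι hwand S hS hS2 Un hUn hUnS ip hip
end

section
/- Let Φ ∈ S₂(E, E_*) and let K be a closed subspace of K_Φ with an orthogonal direct sum decomposition K = ⊕_{j=1}^∞ K_j. Let H_K denote the operator range of V*|_K. Then the reproducing kernel of H_K at (z, w) is V* P_K V D_{Φ*}² k_w(z), and it equals the sum of the reproducing kernels of the spaces H_{K_j}. -/
/-!
For mutually orthogonal closed subspaces `Kᵢ`, the finite sums `∑_{i ∈ s} P_{Kᵢ}` are the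
orthogonal projections onto `⨆_{i ∈ s} Kᵢ`; these subspaces increase to a dense subspace of
`K = closure (⨆ᵢ Kᵢ)`, so the partial sums converge to `P_K`, and applying `V*` splits the kernel.

For the reproducing property put `A = V* P_K`, so `A* = P_K V` and the kernel element is
`A (A* D²k_w v)`. Since `A* h ⊥ ker A`, the operator-range inner product gives
`⟨A A* h, A x⟩_{H_K} = ⟪A* h, x⟫ = ⟪h, A x⟫`, which for `h = D²k_w v` is `⟪v, (A x)(w)⟫`.
-/

open scoped InnerProductSpace

namespace OrthogonalFamily

variable {𝕜 E ι : Type*} [RCLike 𝕜] [NormedAddCommGroup E] [InnerProductSpace 𝕜 E]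
  {K : ι → Submodule 𝕜 E} [∀ i, (K i).HasOrthogonalProjection]

theorem sub_sum_starProjection_mem_orthogonal
    (hK : OrthogonalFamily 𝕜 (fun i => K i) fun i => (K i).subtypeₗᵢ) (s : Finset ι) (v : E) :
    v - ∑ i ∈ s, (K i).starProjection v ∈ (⨆ i ∈ s, K i)ᗮ := by
  rw [iSup_subtype', ← Submodule.iInf_orthogonal, Submodule.mem_iInf]
  rintro ⟨i, hi⟩
  rw [Submodule.mem_orthogonal]
  intro x hx
  rw [inner_sub_right, _root_.inner_sum, Finset.sum_eq_single_of_mem i hi, ← inner_sub_right]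
  · exact (K i).inner_right_of_mem_orthogonal hx (Submodule.sub_starProjection_mem_orthogonal v)
  · intro j _ hji
    exact hK hji.symm ⟨x, hx⟩ ⟨_, Submodule.coe_mem _⟩

theorem hasOrthogonalProjection_biSup
    (hK : OrthogonalFamily 𝕜 (fun i => K i) fun i => (K i).subtypeₗᵢ) (s : Finset ι) :
    (⨆ i ∈ s, K i).HasOrthogonalProjection :=
  ⟨fun v => ⟨_, Submodule.sum_mem _ fun _ hi => le_biSup K hi (Submodule.coe_mem _),
    hK.sub_sum_starProjection_mem_orthogonal s v⟩⟩

theorem starProjection_biSup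
    (hK : OrthogonalFamily 𝕜 (fun i => K i) fun i => (K i).subtypeₗᵢ) (s : Finset ι)
    [(⨆ i ∈ s, K i).HasOrthogonalProjection] (v : E) :
    (⨆ i ∈ s, K i).starProjection v = ∑ i ∈ s, (K i).starProjection v :=
  Submodule.eq_starProjection_of_mem_orthogonal
    (Submodule.sum_mem _ fun _ hi => le_biSup K hi (Submodule.coe_mem _))
    (hK.sub_sum_starProjection_mem_orthogonal s v)

theorem hasSum_starProjection
    (hK : OrthogonalFamily 𝕜 (fun i => K i) fun i => (K i).subtypeₗᵢ)
    [(⨆ i, K i).topologicalClosure.HasOrthogonalProjection] (v : E) :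
    HasSum (fun i => (K i).starProjection v) ((⨆ i, K i).topologicalClosure.starProjection v) := by
  have hfin := hK.hasOrthogonalProjection_biSup
  have hmono : Monotone fun s : Finset ι => ⨆ i ∈ s, K i :=
    fun _ _ hst => biSup_mono fun _ hi => hst hi
  have hsup : ⨆ s : Finset ι, ⨆ i ∈ s, K i = ⨆ i, K i := (iSup_eq_iSup_finset K).symm
  have hclosure : (⨆ s : Finset ι, ⨆ i ∈ s, K i).topologicalClosure.HasOrthogonalProjection := by
    rwa [hsup]
  have key := Submodule.starProjection_tendsto_closure_iSup _ hmono v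
  simp only [hsup, hK.starProjection_biSup] at key
  exact key

end OrthogonalFamily

namespace ContinuousLinearMap

variable {𝕜 E F : Type*} [RCLike 𝕜] [NormedAddCommGroup E] [InnerProductSpace 𝕜 E]
  [CompleteSpace E] [NormedAddCommGroup F] [InnerProductSpace 𝕜 F] [CompleteSpace F]

theorem operatorRange_inner_apply_adjoint_left (T : E →L[𝕜] F) {ip : F → F → 𝕜}
    (hip : ∀ x y, x ∈ (LinearMap.ker (T : E →ₗ[𝕜] F))ᗮ → ip (T x) (T y) = ⟪x, y⟫_𝕜)
    (h : F) (y : E) : ip (T (adjoint T h)) (T y) = ⟪h, T y⟫_𝕜 := by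
  rw [hip _ _ (T.orthogonal_ker ▸ Submodule.le_topologicalClosure _ ⟨h, rfl⟩), adjoint_inner_left]

end ContinuousLinearMap

open scoped ComplexInnerProductSpace

theorem stmt_12_general {Estar H KH : Type*}
    [NormedAddCommGroup Estar] [InnerProductSpace ℂ Estar]
    [NormedAddCommGroup H] [InnerProductSpace ℂ H] [CompleteSpace H]
    [NormedAddCommGroup KH] [InnerProductSpace ℂ KH] [CompleteSpace KH]
    (bidisk : Set (ℂ × ℂ))
    -- H_Φ as an RKHS on the bidisk, with kernel elements κ w v = D_{Φ*}² k_w v: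
    (ev : H →ₗ[ℂ] (ℂ × ℂ) → Estar)
    (κ : (ℂ × ℂ) → Estar → H)
    (hrep : ∀ (f : H), ∀ w ∈ bidisk, ∀ v : Estar, ⟪κ w v, f⟫ = ⟪v, ev f w⟫)
    -- the canonical isometry V : H_Φ → K_Φ ⊆ scattering space:
    (V : H →L[ℂ] KH)
    -- K, a closed subspace of K_Φ, with orthogonal decomposition K = ⊕_j K_j:
    (K : Submodule ℂ KH) [CompleteSpace K]
    (Kj : ℕ → Submodule ℂ KH) [∀ n, CompleteSpace (Kj n)]
    (hKjorth : ∀ m n, m ≠ n → ∀ x ∈ Kj m, ∀ y ∈ Kj n, ⟪x, y⟫ = 0)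
    (hKsup : K = (⨆ n, Kj n).topologicalClosure)
    -- the H_K inner product: the operator-range inner product of A = V* P_K:
    (ipK : H → H → ℂ)
    (hipK : ∀ x y : KH,
      x ∈ (LinearMap.ker ((ContinuousLinearMap.adjoint V ∘L
            (K.subtypeL ∘L Submodule.orthogonalProjectionOnto K) : KH →ₗ[ℂ] H)))ᗮ →
      ipK (ContinuousLinearMap.adjoint V ((Submodule.orthogonalProjectionOnto K x : K) : KH))
          (ContinuousLinearMap.adjoint V ((Submodule.orthogonalProjectionOnto K y : K) : KH)) = ⟪x, y⟫) :
    -- (1) the reproducing kernel of H_K is V* P_K V D²k_w: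
    (∀ (x : KH), ∀ w ∈ bidisk, ∀ v : Estar,
        ipK (ContinuousLinearMap.adjoint V ((Submodule.orthogonalProjectionOnto K (V (κ w v)) : K) : KH))
            (ContinuousLinearMap.adjoint V ((Submodule.orthogonalProjectionOnto K x : K) : KH)) =
          ⟪v, ev (ContinuousLinearMap.adjoint V ((Submodule.orthogonalProjectionOnto K x : K) : KH)) w⟫) ∧
      -- (2) it is the sum of the reproducing kernels of the H_{K_j}:
      ∀ w ∈ bidisk, ∀ v : Estar,
        HasSum
          (fun n : ℕ =>
            ContinuousLinearMap.adjoint V ((Submodule.orthogonalProjectionOnto (Kj n) (V (κ w v)) : Kj n) : KH))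
          (ContinuousLinearMap.adjoint V ((Submodule.orthogonalProjectionOnto K (V (κ w v)) : K) : KH)) := by
  set A : KH →L[ℂ] H := ContinuousLinearMap.adjoint V ∘L K.starProjection
  -- `A* = P_K V` and `P_K` is idempotent.
  have hA (h : H) : A (V h) = A (ContinuousLinearMap.adjoint A h) := by
    simp [A, ContinuousLinearMap.adjoint_comp, (isSelfAdjoint_starProjection K).adjoint_eq,
      Submodule.starProjection_eq_self_iff.mpr (K.starProjection_apply_mem _)]
  refine ⟨fun x w hw v => ?_, fun w _ v => ?_⟩
  · change ipK (A (V (κ w v))) (A x) = ⟪v, ev (A x) w⟫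
    rw [hA, A.operatorRange_inner_apply_adjoint_left hipK, hrep _ w hw]
  · subst hKsup
    exact ((OrthogonalFamily.hasSum_starProjection
      (fun m n hmn x y => hKjorth m n hmn x x.2 y y.2) (V (κ w v))).mapL
      (ContinuousLinearMap.adjoint V))

theorem stmt_12 {Estar H KH : Type*}
    [NormedAddCommGroup Estar] [InnerProductSpace ℂ Estar] [CompleteSpace Estar]
    [NormedAddCommGroup H] [InnerProductSpace ℂ H] [CompleteSpace H]
    [NormedAddCommGroup KH] [InnerProductSpace ℂ KH] [CompleteSpace KH]
    (bidisk : Set (ℂ × ℂ)) (hbidisk : bidisk = {z : ℂ × ℂ | ‖z.1‖ < 1 ∧ ‖z.2‖ < 1})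
    -- H_Φ as an RKHS on the bidisk, with kernel elements κ w v = D_{Φ*}² k_w v:
    (ev : H →ₗ[ℂ] (ℂ × ℂ) → Estar) (hev : Function.Injective ev)
    (κ : (ℂ × ℂ) → Estar → H)
    (hrep : ∀ (f : H), ∀ w ∈ bidisk, ∀ v : Estar, ⟪κ w v, f⟫ = ⟪v, ev f w⟫)
    -- the canonical isometry V : H_Φ → K_Φ ⊆ scattering space:
    (V : H →L[ℂ] KH) (hV : ∀ x : H, ‖V x‖ = ‖x‖)
    -- K, a closed subspace of K_Φ, with orthogonal decomposition K = ⊕_j K_j: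
    (K : Submodule ℂ KH) [CompleteSpace K]
    (Kj : ℕ → Submodule ℂ KH) [∀ n, CompleteSpace (Kj n)]
    (hKjK : ∀ n, Kj n ≤ K)
    (hKjorth : ∀ m n, m ≠ n → ∀ x ∈ Kj m, ∀ y ∈ Kj n, ⟪x, y⟫ = 0)
    (hKsup : K = (⨆ n, Kj n).topologicalClosure)
    -- the H_K inner product: the operator-range inner product of A = V* P_K:
    (ipK : H → H → ℂ)
    (hipK : ∀ x y : KH,
      x ∈ (LinearMap.ker ((ContinuousLinearMap.adjoint V ∘L
            (K.subtypeL ∘L Submodule.orthogonalProjectionOnto K) : KH →ₗ[ℂ] H)))ᗮ →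
      ipK (ContinuousLinearMap.adjoint V ((Submodule.orthogonalProjectionOnto K x : K) : KH))
          (ContinuousLinearMap.adjoint V ((Submodule.orthogonalProjectionOnto K y : K) : KH)) = ⟪x, y⟫) :
    -- (1) the reproducing kernel of H_K is V* P_K V D²k_w:
    (∀ (x : KH), ∀ w ∈ bidisk, ∀ v : Estar,
        ipK (ContinuousLinearMap.adjoint V ((Submodule.orthogonalProjectionOnto K (V (κ w v)) : K) : KH))
            (ContinuousLinearMap.adjoint V ((Submodule.orthogonalProjectionOnto K x : K) : KH)) =
          ⟪v, ev (ContinuousLinearMap.adjoint V ((Submodule.orthogonalProjectionOnto K x : K) : KH)) w⟫) ∧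
      -- (2) it is the sum of the reproducing kernels of the H_{K_j}:
      ∀ w ∈ bidisk, ∀ v : Estar,
        HasSum
          (fun n : ℕ =>
            ContinuousLinearMap.adjoint V ((Submodule.orthogonalProjectionOnto (Kj n) (V (κ w v)) : Kj n) : KH))
          (ContinuousLinearMap.adjoint V ((Submodule.orthogonalProjectionOnto K (V (κ w v)) : K) : KH)) :=
  stmt_12_general bidisk ev κ hrep V K Kj hKjorth hKsup ipK hipK
end

section
/- Let Φ ∈ S₂(E, E_*), let K₁^{max} be the reproducing kernel for the operator range of V* restricted to S₁^{max} ⊖ Z₁S₁^{max}. Then the reproducing kernel of H₁^{max} (the operator range of V*|_{S₁^{max}}) is K₁^{max}(z,w)/(1 − z₁w̄₁). -/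
/-!
Since `Z` is an isometry and `S = S₁^{max}` is `Z`-invariant, `S = N ⊕ Z S` with `Z P_S Z*`
the projection onto `Z S`, so `P_S = P_N + Z P_S Z*`. Pair this with `V κ_z` at `V κ_w`:
`V*` turns `Z` into multiplication by `z₁` on `S`, and kernel functions are eigenvectors of the
adjoint of a multiplier, so the last term is `z₁ w̄₁ K_S(z, w)`. Thus `K_S = K_N + z₁ w̄₁ K_S`,
which is solved for `K_S` because `|z₁ w̄₁| < 1` on the bidisk.
-/

open scoped ComplexInnerProductSpace

section Wandering

open scoped InnerProductSpace

variable {𝕜 E : Type*} [RCLike 𝕜] [NormedAddCommGroup E] [InnerProductSpace 𝕜 E]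

open ContinuousLinearMap in
theorem inner_map_map_of_adjoint_comp_self_eq_one [CompleteSpace E] {Z : E →L[𝕜] E}
    (hZ : adjoint Z ∘L Z = 1) (a b : E) : ⟪Z a, Z b⟫_𝕜 = ⟪a, b⟫_𝕜 := by
  rw [← adjoint_inner_right, ← comp_apply, hZ]
  rfl

namespace Submodule

theorem inner_starProjection_left_of_mem {K : Submodule 𝕜 E} [K.HasOrthogonalProjection]
    {s : E} (hs : s ∈ K) (u : E) : ⟪K.starProjection u, s⟫_𝕜 = ⟪u, s⟫_𝕜 := by
  rw [inner_starProjection_left_eq_right, starProjection_eq_self_iff.mpr hs]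

open ContinuousLinearMap in
theorem starProjection_eq_starProjection_wandering_add [CompleteSpace E] {Z : E →L[𝕜] E}
    (hZ : adjoint Z ∘L Z = 1) {S N : Submodule 𝕜 E} [S.HasOrthogonalProjection]
    [N.HasOrthogonalProjection] (hSZ : ∀ p ∈ S, Z p ∈ S) (hN : N = S ⊓ (S.map (Z : E →ₗ[𝕜] E))ᗮ)
    (x : E) : S.starProjection x = N.starProjection x + Z (S.starProjection (adjoint Z x)) := by
  have ht : S.starProjection (adjoint Z x) ∈ S := S.starProjection_apply_mem _
  rw [← sub_eq_iff_eq_add, eq_comm]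
  subst hN
  refine eq_starProjection_of_mem_of_inner_eq_zero
    ⟨S.sub_mem (S.starProjection_apply_mem x) (hSZ _ ht), (mem_orthogonal' _ _).2 ?_⟩ ?_
  · rintro _ ⟨s, hs, rfl⟩
    change ⟪_, Z s⟫_𝕜 = 0
    rw [inner_sub_left, inner_map_map_of_adjoint_comp_self_eq_one hZ,
      inner_starProjection_left_of_mem (hSZ s hs), inner_starProjection_left_of_mem hs,
      adjoint_inner_left, sub_self]
  · rintro n ⟨hnS, hnZ⟩
    rw [show x - (S.starProjection x - Z (S.starProjection (adjoint Z x))) =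
        (x - S.starProjection x) + Z (S.starProjection (adjoint Z x)) by abel,
      inner_add_left, S.starProjection_inner_eq_zero x n hnS, zero_add]
    exact (mem_orthogonal _ _).1 hnZ _ ⟨_, ht, rfl⟩

end Submodule

end Wandering

theorem one_sub_mul_conj_ne_zero {a b : ℂ} (ha : ‖a‖ < 1) (hb : ‖b‖ < 1) :
    1 - a * starRingEnd ℂ b ≠ 0 := by
  rw [sub_ne_zero]
  intro h
  have hlt : ‖a * starRingEnd ℂ b‖ < 1 := by
    rw [norm_mul, Complex.norm_conj]
    exact mul_lt_one_of_nonneg_of_lt_one_left (norm_nonneg a) ha hb.le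
  rw [← h, norm_one] at hlt
  exact lt_irrefl 1 hlt

section ReproducingKernel

open ContinuousLinearMap

variable {X Estar H KH : Type*} [NormedAddCommGroup Estar] [InnerProductSpace ℂ Estar]
  [NormedAddCommGroup H] [InnerProductSpace ℂ H]
  {D : Set X} {ev : H →ₗ[ℂ] X → Estar} {κ : X → Estar → H} {M : H →L[ℂ] H} {φ : X → ℂ}

theorem inner_kernel_mul_eq (hrep : ∀ f : H, ∀ w ∈ D, ∀ v : Estar, ⟪κ w v, f⟫ = ⟪v, ev f w⟫)
    (hM : ∀ f : H, ∀ z ∈ D, ev (M f) z = φ z • ev f z) {z : X} (hz : z ∈ D) (v : Estar) (f : H) :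
    ⟪κ z v, M f⟫ = φ z * ⟪κ z v, f⟫ := by
  rw [hrep _ z hz, hrep _ z hz, hM _ z hz, inner_smul_right]

variable [CompleteSpace H] [NormedAddCommGroup KH] [InnerProductSpace ℂ KH] [CompleteSpace KH]
  {V : H →L[ℂ] KH} {Z : KH →L[ℂ] KH} {S : Submodule ℂ KH}

theorem inner_map_kernel_eq_of_intertwine
    (hrep : ∀ f : H, ∀ w ∈ D, ∀ v : Estar, ⟪κ w v, f⟫ = ⟪v, ev f w⟫)
    (hM : ∀ f : H, ∀ z ∈ D, ev (M f) z = φ z • ev f z)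
    (hint : ∀ p ∈ S, adjoint V (Z p) = M (adjoint V p)) {z : X} (hz : z ∈ D) (v : Estar)
    {p : KH} (hp : p ∈ S) : ⟪V (κ z v), Z p⟫ = φ z * ⟪V (κ z v), p⟫ := by
  rw [← adjoint_inner_right, hint p hp, inner_kernel_mul_eq hrep hM hz, adjoint_inner_right]

theorem inner_kernel_starProjection_eq [S.HasOrthogonalProjection] {N : Submodule ℂ KH}
    [N.HasOrthogonalProjection] (hrep : ∀ f : H, ∀ w ∈ D, ∀ v : Estar, ⟪κ w v, f⟫ = ⟪v, ev f w⟫)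
    (hM : ∀ f : H, ∀ z ∈ D, ev (M f) z = φ z • ev f z) (hZ : adjoint Z ∘L Z = 1)
    (hSZ : ∀ p ∈ S, Z p ∈ S) (hint : ∀ p ∈ S, adjoint V (Z p) = M (adjoint V p))
    (hN : N = S ⊓ (S.map (Z : KH →ₗ[ℂ] KH))ᗮ) {w z : X} (hw : w ∈ D) (hz : z ∈ D) (v v' : Estar) :
    ⟪V (κ z v'), S.starProjection (V (κ w v))⟫ =
      ⟪V (κ z v'), N.starProjection (V (κ w v))⟫ +
        φ z * starRingEnd ℂ (φ w) * ⟪V (κ z v'), S.starProjection (V (κ w v))⟫ := by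
  have hconj : ⟪V (κ z v'), S.starProjection (adjoint Z (V (κ w v)))⟫ =
      starRingEnd ℂ (φ w) * ⟪V (κ z v'), S.starProjection (V (κ w v))⟫ := by
    rw [← Submodule.inner_starProjection_left_eq_right, adjoint_inner_right, ← inner_conj_symm,
      inner_map_kernel_eq_of_intertwine hrep hM hint hw v (S.starProjection_apply_mem _), map_mul,
      inner_conj_symm, Submodule.inner_starProjection_left_eq_right]
  rw [mul_assoc, ← hconj, ← inner_map_kernel_eq_of_intertwine hrep hM hint hz v'
    (S.starProjection_apply_mem _), ← inner_add_right,
    ← Submodule.starProjection_eq_starProjection_wandering_add hZ hSZ hN]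

theorem ev_adjoint_starProjection_eq_inv_smul [S.HasOrthogonalProjection] {N : Submodule ℂ KH}
    [N.HasOrthogonalProjection] (hrep : ∀ f : H, ∀ w ∈ D, ∀ v : Estar, ⟪κ w v, f⟫ = ⟪v, ev f w⟫)
    (hM : ∀ f : H, ∀ z ∈ D, ev (M f) z = φ z • ev f z) (hZ : adjoint Z ∘L Z = 1)
    (hSZ : ∀ p ∈ S, Z p ∈ S) (hint : ∀ p ∈ S, adjoint V (Z p) = M (adjoint V p))
    (hN : N = S ⊓ (S.map (Z : KH →ₗ[ℂ] KH))ᗮ) {w z : X} (hw : w ∈ D) (hz : z ∈ D)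
    (hne : 1 - φ z * starRingEnd ℂ (φ w) ≠ 0) (v : Estar) :
    ev (adjoint V (S.starProjection (V (κ w v)))) z =
      (1 - φ z * starRingEnd ℂ (φ w))⁻¹ • ev (adjoint V (N.starProjection (V (κ w v)))) z := by
  refine ext_inner_left ℂ fun v' => ?_
  have hker := inner_kernel_starProjection_eq hrep hM hZ hSZ hint hN hw hz v v'
  rw [inner_smul_right, ← hrep _ z hz, ← hrep _ z hz, adjoint_inner_right, adjoint_inner_right]
  field_simp
  linear_combination hker

end ReproducingKernel

theorem stmt_14_general {Estar H KH : Type*}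
    [NormedAddCommGroup Estar] [InnerProductSpace ℂ Estar]
    [NormedAddCommGroup H] [InnerProductSpace ℂ H] [CompleteSpace H]
    [NormedAddCommGroup KH] [InnerProductSpace ℂ KH] [CompleteSpace KH]
    (bidisk : Set (ℂ × ℂ)) (hbidisk : bidisk = {z : ℂ × ℂ | ‖z.1‖ < 1 ∧ ‖z.2‖ < 1})
    -- H_Φ as an RKHS on the bidisk:
    (ev : H →ₗ[ℂ] (ℂ × ℂ) → Estar)
    (κ : (ℂ × ℂ) → Estar → H)
    (hrep : ∀ (f : H), ∀ w ∈ bidisk, ∀ v : Estar, ⟪κ w v, f⟫ = ⟪v, ev f w⟫)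
    -- multiplication by the coordinate z₁ on H_Φ:
    (Mz1 : H →L[ℂ] H)
    (hMz1 : ∀ (f : H), ∀ z ∈ bidisk, ev (Mz1 f) z = z.1 • ev f z)
    -- the canonical isometry V and the unitary Z₁ on the scattering space:
    (V : H →L[ℂ] KH)
    (Z : KH →L[ℂ] KH)
    (hZu : ContinuousLinearMap.adjoint Z ∘L Z = 1 ∧ Z ∘L ContinuousLinearMap.adjoint Z = 1)
    -- S₁^{max}: closed, Z₁-invariant, V* intertwines Z₁ with Mz1 on it, and its residual
    -- Wold part lies in ker V*:
    (Smax : Submodule ℂ KH) [CompleteSpace Smax]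
    (hSmaxZ : ∀ p ∈ Smax, Z p ∈ Smax)
    (hintertwine : ∀ p ∈ Smax,
      ContinuousLinearMap.adjoint V (Z p) = Mz1 (ContinuousLinearMap.adjoint V p))
    -- N = S₁^{max} ⊖ Z₁S₁^{max}:
    (N : Submodule ℂ KH) [CompleteSpace N]
    (hN : N = Smax ⊓ (Submodule.map (Z : KH →ₗ[ℂ] KH) Smax)ᗮ) :
    -- the reproducing kernel of H₁^{max} is K₁^{max}(z,w)/(1 − z₁w̄₁):
    ∀ w ∈ bidisk, ∀ z ∈ bidisk, ∀ v : Estar,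
      ev (ContinuousLinearMap.adjoint V ((Submodule.orthogonalProjectionOnto Smax (V (κ w v)) : Smax) : KH)) z =
        (1 - z.1 * (starRingEnd ℂ) w.1)⁻¹ •
          ev (ContinuousLinearMap.adjoint V ((Submodule.orthogonalProjectionOnto N (V (κ w v)) : N) : KH)) z := by
  intro w hw z hz v
  have hne : 1 - z.1 * starRingEnd ℂ w.1 ≠ 0 := by
    rw [hbidisk] at hw hz
    exact one_sub_mul_conj_ne_zero hz.1 hw.1
  exact ev_adjoint_starProjection_eq_inv_smul (φ := Prod.fst) hrep hMz1 hZu.1 hSmaxZ hintertwine hN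
    hw hz hne v

theorem stmt_14 {Estar H KH : Type*}
    [NormedAddCommGroup Estar] [InnerProductSpace ℂ Estar] [CompleteSpace Estar]
    [NormedAddCommGroup H] [InnerProductSpace ℂ H] [CompleteSpace H]
    [NormedAddCommGroup KH] [InnerProductSpace ℂ KH] [CompleteSpace KH]
    (bidisk : Set (ℂ × ℂ)) (hbidisk : bidisk = {z : ℂ × ℂ | ‖z.1‖ < 1 ∧ ‖z.2‖ < 1})
    -- H_Φ as an RKHS on the bidisk:
    (ev : H →ₗ[ℂ] (ℂ × ℂ) → Estar) (hev : Function.Injective ev)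
    (κ : (ℂ × ℂ) → Estar → H)
    (hrep : ∀ (f : H), ∀ w ∈ bidisk, ∀ v : Estar, ⟪κ w v, f⟫ = ⟪v, ev f w⟫)
    -- multiplication by the coordinate z₁ on H_Φ:
    (Mz1 : H →L[ℂ] H)
    (hMz1 : ∀ (f : H), ∀ z ∈ bidisk, ev (Mz1 f) z = z.1 • ev f z)
    -- the canonical isometry V and the unitary Z₁ on the scattering space:
    (V : H →L[ℂ] KH) (hV : ∀ x : H, ‖V x‖ = ‖x‖)
    (Z : KH →L[ℂ] KH)
    (hZu : ContinuousLinearMap.adjoint Z ∘L Z = 1 ∧ Z ∘L ContinuousLinearMap.adjoint Z = 1)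
    -- S₁^{max}: closed, Z₁-invariant, V* intertwines Z₁ with Mz1 on it, and its residual
    -- Wold part lies in ker V*:
    (Smax : Submodule ℂ KH) [CompleteSpace Smax]
    (hSmaxZ : ∀ p ∈ Smax, Z p ∈ Smax)
    (hintertwine : ∀ p ∈ Smax,
      ContinuousLinearMap.adjoint V (Z p) = Mz1 (ContinuousLinearMap.adjoint V p))
    (hWold : ∀ p : KH, (∀ n : ℕ, ∃ q ∈ Smax, (Z ^ n) q = p) →
      ContinuousLinearMap.adjoint V p = 0)
    -- N = S₁^{max} ⊖ Z₁S₁^{max}: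
    (N : Submodule ℂ KH) [CompleteSpace N]
    (hN : N = Smax ⊓ (Submodule.map (Z : KH →ₗ[ℂ] KH) Smax)ᗮ) :
    -- the reproducing kernel of H₁^{max} is K₁^{max}(z,w)/(1 − z₁w̄₁):
    ∀ w ∈ bidisk, ∀ z ∈ bidisk, ∀ v : Estar,
      ev (ContinuousLinearMap.adjoint V ((Submodule.orthogonalProjectionOnto Smax (V (κ w v)) : Smax) : KH)) z =
        (1 - z.1 * (starRingEnd ℂ) w.1)⁻¹ •
          ev (ContinuousLinearMap.adjoint V ((Submodule.orthogonalProjectionOnto N (V (κ w v)) : N) : KH)) z :=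
  stmt_14_general bidisk hbidisk ev κ hrep Mz1 hMz1 V Z hZu Smax hSmaxZ hintertwine N hN
end
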